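/- arXiv:1807.08256 — 4 statements merged into one kernel-verified Lean document; each statement's English description precedes it below -/
import Mathlib

section
/- Let h, h₁, h₂, τ : ℝ → ℝ, and let m, a, z be real numbers with h₁(m) ≠ 0. Set I = a / h₁(m) − h₂(m). Assume h₁ has derivative h₁'(m) at m, h₂ has derivative h₂'(m) at m, and τ has derivative τ'(I) at I. Then the contaminated-index function ε ↦ τ( ((1−ε)·a + ε·h(z)) / h₁((1−ε)·m + ε·z) − h₂((1−ε)·m + ε·z) ) has derivative at ε = 0 equal to τ'(I) · ( −( h₁'(m)·a / h₁(m)² + h₂'(m) )·(z − m) + (h(z) − a)/h₁(m) ). -/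
/-!
Write the contaminated index as `τ ∘ g` with `g ε = N ε / h₁ (u ε) - h₂ (u ε)`, where
`N ε = (1 - ε) a + ε h(z)` and `u ε = (1 - ε) m + ε z` are affine with slopes `h(z) - a` and
`z - m`. At `ε = 0` we have `u 0 = m`, `N 0 = a` and `g 0 = I`, so the quotient, chain and difference
rules give `g'(0) = ((h(z) - a) h₁(m) - a h₁'(m) (z - m)) / h₁(m)² - h₂'(m) (z - m)`, and one more
chain rule through `τ` at `I` gives the influence function.
-/

section Contamination

variable {𝕜 : Type*} [NontriviallyNormedField 𝕜]

theorem hasDerivAt_one_sub_mul_add_mul (x y t : 𝕜) :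
    HasDerivAt (fun ε : 𝕜 => (1 - ε) * x + ε * y) (y - x) t := by
  have hline : (fun ε : 𝕜 => (1 - ε) * x + ε * y) = AffineMap.lineMap x y :=
    funext fun ε => (AffineMap.lineMap_apply_ring x y ε).symm
  exact hline ▸ AffineMap.hasDerivAt_lineMap

theorem HasDerivAt.comp_one_sub_mul_add_mul_zero {f : 𝕜 → 𝕜} {f' x : 𝕜}
    (hf : HasDerivAt f f' x) (y : 𝕜) :
    HasDerivAt (fun ε : 𝕜 => f ((1 - ε) * x + ε * y)) (f' * (y - x)) 0 := by
  have hx : (1 - 0) * x + 0 * y = x := by ring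
  exact (hx ▸ hf).comp 0 (hasDerivAt_one_sub_mul_add_mul x y 0)

end Contamination

theorem influence_function_theil_like
    (h h₁ h₂ τ : ℝ → ℝ) (m a z : ℝ)
    (h₁' h₂' τ' : ℝ)
    (hne : h₁ m ≠ 0)
    (I : ℝ) (hI : I = a / h₁ m - h₂ m)
    (hd1 : HasDerivAt h₁ h₁' m)
    (hd2 : HasDerivAt h₂ h₂' m)
    (hdτ : HasDerivAt τ τ' I) :
    HasDerivAt
      (fun ε : ℝ =>
        τ (((1 - ε) * a + ε * h z) / h₁ ((1 - ε) * m + ε * z)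
            - h₂ ((1 - ε) * m + ε * z)))
      (τ' * (-(h₁' * a / (h₁ m) ^ 2 + h₂') * (z - m) + (h z - a) / h₁ m))
      0 := by
  have hm : (1 - 0) * m + 0 * z = m := by ring
  have hinner :=
    ((hasDerivAt_one_sub_mul_add_mul a (h z) 0).fun_div (hd1.comp_one_sub_mul_add_mul_zero z)
      (by rwa [hm])).fun_sub (hd2.comp_one_sub_mul_add_mul_zero z)
  have hτ : HasDerivAt τ τ'
      (((1 - 0) * a + 0 * h z) / h₁ ((1 - 0) * m + 0 * z) - h₂ ((1 - 0) * m + 0 * z)) := by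
    convert hdτ using 1
    rw [hm, hI]
    ring
  refine (hτ.comp 0 hinner).congr_deriv ?_
  rw [hm]
  field_simp
  ring
end

section
/- Let μ > 0, z > 0, and ν be real numbers. Then the function ε ↦ ((1−ε)·ν + ε·z·log z) / ((1−ε)·μ + ε·z) − log((1−ε)·μ + ε·z) has derivative at ε = 0 equal to (1/μ)·(z·log z − ν) − ((ν + μ)/μ²)·(z − μ). -/
open Real

/-- Theil's index `ν / μ - log μ` as a function of the mean `μ = E[X]` and of `ν = E[X log X]`. -/
noncomputable def theilOfMoments (μ ν : ℝ) : ℝ := ν / μ - log μ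

theorem hasDerivAt_mixture (a b t : ℝ) :
    HasDerivAt (fun ε : ℝ => (1 - ε) * a + ε * b) (b - a) t := by
  have h := ((hasDerivAt_id t).const_sub 1 |>.mul_const a).add ((hasDerivAt_id t).mul_const b)
  exact h.congr_deriv (by ring)

theorem HasDerivAt.theilOfMoments {m e : ℝ → ℝ} {m' e' t : ℝ} (hm : HasDerivAt m m' t)
    (he : HasDerivAt e e' t) (hmt : m t ≠ 0) :
    HasDerivAt (fun ε => theilOfMoments (m ε) (e ε))
      ((e' * m t - e t * m') / m t ^ 2 - m' / m t) t :=
  (he.div hm hmt).sub (hm.log hmt)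

theorem influence_function_Theil_general (μ z ν : ℝ) (hμ : 0 < μ) :
    HasDerivAt
      (fun ε : ℝ =>
        ((1 - ε) * ν + ε * (z * Real.log z)) / ((1 - ε) * μ + ε * z)
          - Real.log ((1 - ε) * μ + ε * z))
      ((1 / μ) * (z * Real.log z - ν) - ((ν + μ) / μ ^ 2) * (z - μ))
      0 := by
  have hmean_zero : (1 - 0) * μ + 0 * z = μ := by ring
  have h := (hasDerivAt_mixture μ z 0).theilOfMoments (hasDerivAt_mixture ν (z * log z) 0)
    (by rw [hmean_zero]; exact hμ.ne')
  refine h.congr_deriv ?_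
  rw [hmean_zero, zero_mul, sub_zero, one_mul, add_zero]
  field_simp
  ring

theorem influence_function_Theil (μ z ν : ℝ) (hμ : 0 < μ) (hz : 0 < z) :
    HasDerivAt
      (fun ε : ℝ =>
        ((1 - ε) * ν + ε * (z * Real.log z)) / ((1 - ε) * μ + ε * z)
          - Real.log ((1 - ε) * μ + ε * z))
      ((1 / μ) * (z * Real.log z - ν) - ((ν + μ) / μ ^ 2) * (z - μ))
      0 :=
  influence_function_Theil_general μ z ν hμ
end

section
/- Let β be a real number with 0 < β < 1, and let μ > 0, z > 0, and m_β > 0 be real numbers (real powers taken as rpow). Then the function ε ↦ 1 − ( ((1−ε)·m_β + ε·z^β) / ((1−ε)·μ + ε·z)^β )^{1/β} has derivative at ε = 0 equal to (m_β^{1/β}/μ) · ( (z − μ)/μ − (z^β − m_β)/(β·m_β) ). -/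
/-! Since `(a / b ^ β) ^ (1 / β) = a ^ (1 / β) / b` for `a, b ≥ 0`, near `ε = 0` the index is
`1 - ‖X_ε‖_β / μ_ε`, where the contaminated `β`-th moment and mean are affine in `ε` with slopes
`z ^ β - m_β` and `z - μ`; the chain and quotient rules then give the influence function. -/

open Filter Topology

lemma Real.div_rpow_rpow_one_div {a b β : ℝ} (ha : 0 ≤ a) (hb : 0 ≤ b) (hβ : β ≠ 0) :
    (a / b ^ β) ^ (1 / β) = a ^ (1 / β) / b := by
  rw [Real.div_rpow ha (Real.rpow_nonneg hb β), one_div, Real.rpow_rpow_inv hb hβ]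

lemma hasDerivAt_convexCombination (a b x : ℝ) :
    HasDerivAt (fun ε : ℝ => (1 - ε) * a + ε * b) (b - a) x := by
  refine ((((hasDerivAt_id' x).const_sub 1).mul_const a).add
    ((hasDerivAt_id' x).mul_const b)).congr_deriv ?_
  ring

lemma HasDerivAt.rpow_one_div_div {f g : ℝ → ℝ} {f' g' x β : ℝ} (hf : HasDerivAt f f' x)
    (hg : HasDerivAt g g' x) (hfx : 0 < f x) (hgx : g x ≠ 0) (hβ : β ≠ 0) :
    HasDerivAt (fun t => f t ^ (1 / β) / g t)
      (f x ^ (1 / β) / g x * (f' / (β * f x) - g' / g x)) x := by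
  refine ((hf.rpow_const (p := 1 / β) (Or.inl hfx.ne')).div hg hgx).congr_deriv ?_
  rw [Real.rpow_sub hfx, Real.rpow_one]
  field_simp

theorem influence_function_Atkinson_general (β μ z mβ : ℝ)
    (hβ0 : 0 < β) (hμ : 0 < μ) (hm : 0 < mβ) :
    HasDerivAt
      (fun ε : ℝ =>
        1 - (((1 - ε) * mβ + ε * z ^ β) / ((1 - ε) * μ + ε * z) ^ β) ^ (1 / β))
      ((mβ ^ (1 / β) / μ) * ((z - μ) / μ - (z ^ β - mβ) / (β * mβ)))
      0 := by
  set moment := fun ε : ℝ => (1 - ε) * mβ + ε * z ^ β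
  set mean := fun ε : ℝ => (1 - ε) * μ + ε * z
  have h_moment := hasDerivAt_convexCombination mβ (z ^ β) 0
  have h_mean := hasDerivAt_convexCombination μ z 0
  have h_moment_pos : ∀ᶠ ε in 𝓝 0, 0 < moment ε :=
    continuousAt_const.eventually_lt h_moment.continuousAt (by simpa [moment] using hm)
  have h_mean_pos : ∀ᶠ ε in 𝓝 0, 0 < mean ε :=
    continuousAt_const.eventually_lt h_mean.continuousAt (by simpa [mean] using hμ)
  have h_norm := h_moment.rpow_one_div_div h_mean (by simpa [moment] using hm)
    (by simpa [mean] using hμ.ne') hβ0.ne'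
  refine ((h_norm.const_sub 1).congr_of_eventuallyEq ?_).congr_deriv ?_
  · filter_upwards [h_moment_pos, h_mean_pos] with ε h₁ h₂
    rw [Real.div_rpow_rpow_one_div h₁.le h₂.le hβ0.ne']
  · simp only [sub_zero, one_mul, zero_mul, add_zero]
    ring

theorem influence_function_Atkinson (β μ z mβ : ℝ)
    (hβ0 : 0 < β) (hβ1 : β < 1) (hμ : 0 < μ) (hz : 0 < z) (hm : 0 < mβ) :
    HasDerivAt
      (fun ε : ℝ =>
        1 - (((1 - ε) * mβ + ε * z ^ β) / ((1 - ε) * μ + ε * z) ^ β) ^ (1 / β))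
      ((mβ ^ (1 / β) / μ) * ((z - μ) / μ - (z ^ β - mβ) / (β * mβ)))
      0 :=
  influence_function_Atkinson_general β μ z mβ hβ0 hμ hm
end

section
/- Let α > 0, let μ and z be real numbers, and let K > 0 be a real number. Then the function ε ↦ (1/α) · log( ((1−ε)·K + ε·exp(−α z)) / exp(−α·((1−ε)·μ + ε·z)) ) has derivative at ε = 0 equal to (z − μ) + (exp(−α z) − K)/(α·K). -/
open Real

theorem hasDerivAt_one_div_mul_log_div_exp_neg_mul {f g : ℝ → ℝ} {f' g' x : ℝ} {α : ℝ}
    (hf : HasDerivAt f f' x) (hfx : f x ≠ 0) (hg : HasDerivAt g g' x) (hα : α ≠ 0) :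
    HasDerivAt (fun t => (1 / α) * log (f t / exp (-α * g t))) (f' / (α * f x) + g') x := by
  have hsplit : (fun t => (1 / α) * log (f t) + g t)
      =ᶠ[nhds x] fun t => (1 / α) * log (f t / exp (-α * g t)) := by
    filter_upwards [hf.continuousAt.eventually_ne hfx] with t ht
    rw [log_div ht (exp_ne_zero _), log_exp]
    field_simp
    ring
  refine (((hf.log hfx).const_mul (1 / α)).add hg).congr_of_eventuallyEq hsplit.symm
    |>.congr_deriv ?_
  field_simp

theorem influence_function_Kolm (α μ z K : ℝ) (hα : 0 < α) (hK : 0 < K) :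
    HasDerivAt
      (fun ε : ℝ =>
        (1 / α) * Real.log
          (((1 - ε) * K + ε * Real.exp (-α * z))
            / Real.exp (-α * ((1 - ε) * μ + ε * z))))
      ((z - μ) + (Real.exp (-α * z) - K) / (α * K))
      0 := by
  simp only [← AffineMap.lineMap_apply_ring]
  have h := hasDerivAt_one_div_mul_log_div_exp_neg_mul
    (AffineMap.hasDerivAt_lineMap (a := K) (b := exp (-α * z)) (x := 0))
    (by simpa using hK.ne') (AffineMap.hasDerivAt_lineMap (a := μ) (b := z) (x := 0)) hα.ne'
  rwa [AffineMap.lineMap_apply_zero, add_comm] at h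
end
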